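/- If n is odd, the number of inequivalent exact factorizations of the dihedral group D_{2n} equals 2^{ω(n)} - 1. -/

import Mathlib

/-- An exact factorization of a finite group `G` is a pair of nontrivial subgroups `(H, K)`
with `HK = G` and `H ∩ K = 1`. -/
def IsExactFactorization {G : Type*} [Group G] (p : Subgroup G × Subgroup G) : Prop :=
  p.1 ≠ ⊥ ∧ p.2 ≠ ⊥ ∧ p.1 ⊓ p.2 = ⊥ ∧ ∀ g : G, ∃ h ∈ p.1, ∃ k ∈ p.2, g = h * k

/-- Two exact factorizations are equivalent if their factor pairs are isomorphic as
unordered pairs of groups. -/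
def FactEquiv {G : Type*} [Group G]
    (p q : {p : Subgroup G × Subgroup G // IsExactFactorization p}) : Prop :=
  (Nonempty (p.1.1 ≃* q.1.1) ∧ Nonempty (p.1.2 ≃* q.1.2)) ∨
  (Nonempty (p.1.1 ≃* q.1.2) ∧ Nonempty (p.1.2 ≃* q.1.1))

/-- The number of exact factorizations of a group, counted up to equivalence. -/
noncomputable def f₂ (G : Type*) [Group G] : ℕ :=
  Nat.card (Quot (FactEquiv (G := G)))

/-!
Since `|H| |K| = 2n` with `n` odd, one factor of an exact factorization `(H, K)` of `D_{2n}`, say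
`H`, has odd order `d`. Then `H` contains no reflection, so it is the unique subgroup of order `d`
of the cyclic rotation group, while `K` contains a reflection `sr a` and is generated by it and
the rotations of order `n / d`. The condition `H ∩ K = 1` says exactly that `d` and `n / d` are
coprime, and `H ≠ 1` that `d ≠ 1`; conversely every such `d` gives a factorization. As `2` is
invertible modulo `n`, conjugation by a rotation moves `sr a` to `sr 0`, so the class of `(H, K)`
depends only on `d`. Unitary divisors of `n` correspond to sets of prime factors of `n`, which
leaves `2 ^ ω(n) - 1` classes.
-/

open Finset

namespace Nat

def unitaryDivisors (n : ℕ) : Finset ℕ := {d ∈ n.divisors | d.Coprime (n / d)}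

variable {n d : ℕ}

theorem mem_unitaryDivisors : d ∈ n.unitaryDivisors ↔ (d ∣ n ∧ n ≠ 0) ∧ d.Coprime (n / d) := by
  rw [unitaryDivisors, mem_filter, mem_divisors]

theorem one_mem_unitaryDivisors (hn : n ≠ 0) : 1 ∈ n.unitaryDivisors :=
  mem_unitaryDivisors.2 ⟨⟨one_dvd n, hn⟩, coprime_one_left _⟩

theorem factorization_eq_of_mem_unitaryDivisors (hd : d ∈ n.unitaryDivisors) {p : ℕ}
    (hp : p ∈ d.primeFactors) : d.factorization p = n.factorization p := by
  obtain ⟨⟨hdn, hn⟩, hcop⟩ := mem_unitaryDivisors.1 hd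
  have hp_ndvd : ¬p ∣ n / d := (prime_of_mem_primeFactors hp).coprime_iff_not_dvd.1
    (hcop.coprime_dvd_left (dvd_of_mem_primeFactors hp))
  have hnd : n / d ≠ 0 := fun h ↦ hp_ndvd (h ▸ dvd_zero p)
  conv_rhs => rw [← Nat.mul_div_cancel' hdn]
  rw [factorization_mul (ne_zero_of_dvd_ne_zero hn hdn) hnd, Finsupp.add_apply,
    factorization_eq_zero_of_not_dvd hp_ndvd, add_zero]

theorem prod_pow_factorization_of_mem_unitaryDivisors (hd : d ∈ n.unitaryDivisors) :
    ∏ p ∈ d.primeFactors, p ^ n.factorization p = d := by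
  obtain ⟨⟨hdn, hn⟩, -⟩ := mem_unitaryDivisors.1 hd
  rw [prod_congr rfl fun p hp ↦ by rw [← factorization_eq_of_mem_unitaryDivisors hd hp]]
  exact (prod_primeFactors_pow_factorization (ne_zero_of_dvd_ne_zero hn hdn)).symm

variable {T : Finset ℕ}

theorem primeFactors_prod_pow_factorization (hT : T ⊆ n.primeFactors) :
    (∏ p ∈ T, p ^ n.factorization p).primeFactors = T := by
  have hprime : ∀ p ∈ T, p.Prime := fun p hp ↦ prime_of_mem_primeFactors (hT hp)
  ext q
  rw [mem_primeFactors_of_ne_zero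
    (prod_ne_zero_iff.2 fun p hp ↦ pow_ne_zero _ (hprime p hp).ne_zero)]
  constructor
  · rintro ⟨hq, hdvd⟩
    obtain ⟨p, hp, hqp⟩ := (Prime.dvd_finsetProd_iff hq.prime _).1 hdvd
    rwa [(prime_dvd_prime_iff_eq hq (hprime p hp)).1 (hq.dvd_of_dvd_pow hqp)]
  · intro hq
    have hv : n.factorization q ≠ 0 := Finsupp.mem_support_iff.1 (support_factorization n ▸ hT hq)
    exact ⟨hprime q hq, (dvd_pow_self q hv).trans (dvd_prod_of_mem _ hq)⟩

theorem prod_pow_factorization_mem_unitaryDivisors (hn : n ≠ 0) (hT : T ⊆ n.primeFactors) :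
    ∏ p ∈ T, p ^ n.factorization p ∈ n.unitaryDivisors := by
  have hsplit : (∏ p ∈ T, p ^ n.factorization p) * ∏ p ∈ n.primeFactors \ T, p ^ n.factorization p
      = n := by
    rw [mul_comm, prod_sdiff hT, ← prod_primeFactors_pow_factorization hn]
  have hpos : 0 < ∏ p ∈ T, p ^ n.factorization p :=
    pos_of_ne_zero (left_ne_zero_of_mul (hsplit ▸ hn))
  refine mem_unitaryDivisors.2 ⟨⟨Dvd.intro _ hsplit, hn⟩, ?_⟩
  rw [Nat.div_eq_of_eq_mul_right hpos hsplit.symm]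
  refine Coprime.prod_left fun p hp ↦ Coprime.prod_right fun q hq ↦ Coprime.pow _ _ ?_
  obtain ⟨hqn, hqT⟩ := mem_sdiff.1 hq
  exact (coprime_primes (prime_of_mem_primeFactors (hT hp)) (prime_of_mem_primeFactors hqn)).2
    fun h ↦ hqT (h ▸ hp)

theorem card_unitaryDivisors (hn : n ≠ 0) : #n.unitaryDivisors = 2 ^ #n.primeFactors := by
  rw [← card_powerset]
  refine card_nbij' primeFactors (fun T ↦ ∏ p ∈ T, p ^ n.factorization p) (fun d hd ↦ ?_)
    (fun T hT ↦ prod_pow_factorization_mem_unitaryDivisors hn (mem_powerset.1 hT))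
    (fun d hd ↦ prod_pow_factorization_of_mem_unitaryDivisors hd)
    (fun T hT ↦ primeFactors_prod_pow_factorization (mem_powerset.1 hT))
  obtain ⟨⟨hdn, -⟩, -⟩ := mem_unitaryDivisors.1 hd
  exact mem_powerset.2 (primeFactors_mono hdn hn)

theorem odd_or_odd_of_mul_eq_two_mul {a b n : ℕ} (hn : Odd n) (h : a * b = 2 * n) :
    Odd a ∨ Odd b := by
  rcases even_or_odd a with ⟨x, rfl⟩ | ha
  · rcases even_or_odd b with ⟨y, rfl⟩ | hb
    · obtain ⟨k, rfl⟩ := hn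
      ring_nf at h
      omega
    · exact .inr hb
  · exact .inl ha

end Nat

namespace ZMod

variable {n : ℕ}

def nsmulKer (n m : ℕ) : AddSubgroup (ZMod n) := (nsmulAddMonoidHom m).ker

theorem mem_nsmulKer {m : ℕ} {x : ZMod n} : x ∈ nsmulKer n m ↔ addOrderOf x ∣ m :=
  addOrderOf_dvd_iff_nsmul_eq_zero.symm

theorem nsmulKer_mono {d m : ℕ} (h : d ∣ m) : nsmulKer n d ≤ nsmulKer n m :=
  fun _ hx ↦ mem_nsmulKer.2 ((mem_nsmulKer.1 hx).trans h)

theorem exists_two_mul_eq (hn : Odd n) (c : ZMod n) : ∃ t, 2 * t = c := by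
  obtain ⟨k, rfl⟩ := hn
  -- `2 (k + 1) = n + 1 = 1` in `ZMod n`
  refine ⟨(k + 1) * c, ?_⟩
  have : ((2 * k + 1 : ℕ) : ZMod (2 * k + 1)) = 0 := ZMod.natCast_self _
  push_cast at this
  linear_combination c * this

theorem natCard_addSubgroup_dvd (A : AddSubgroup (ZMod n)) : Nat.card A ∣ n :=
  A.card_addSubgroup_dvd_card.trans (Nat.card_zmod n).dvd

variable [NeZero n]

theorem natCard_nsmulKer (m : ℕ) : Nat.card (nsmulKer n m) = n.gcd m := by
  rw [nsmulKer, IsAddCyclic.card_nsmulAddMonoidHom_ker, Nat.card_zmod]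

theorem natCard_nsmulKer_of_dvd {m : ℕ} (h : m ∣ n) : Nat.card (nsmulKer n m) = m := by
  rw [natCard_nsmulKer, Nat.gcd_eq_right h]

theorem eq_nsmulKer_natCard (A : AddSubgroup (ZMod n)) : A = nsmulKer n (Nat.card A) :=
  AddSubgroup.eq_of_le_of_card_ge (fun _ hx ↦ mem_nsmulKer.2 (A.addOrderOf_dvd_natCard hx))
    (natCard_nsmulKer_of_dvd (natCard_addSubgroup_dvd A)).le

theorem coprime_natCard_of_disjoint {A B : AddSubgroup (ZMod n)} (h : Disjoint A B) :
    (Nat.card A).Coprime (Nat.card B) := by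
  set g := (Nat.card A).gcd (Nat.card B)
  have hle : nsmulKer n g ≤ A ⊓ B := by
    rw [eq_nsmulKer_natCard A, eq_nsmulKer_natCard B]
    exact le_inf (nsmulKer_mono (Nat.gcd_dvd_left _ _)) (nsmulKer_mono (Nat.gcd_dvd_right _ _))
  have hg : nsmulKer n g = ⊥ := le_bot_iff.1 (hle.trans h.eq_bot.le)
  have hcard :=
    natCard_nsmulKer_of_dvd (m := g) ((Nat.gcd_dvd_left _ _).trans (natCard_addSubgroup_dvd A))
  rw [hg, AddSubgroup.card_bot] at hcard
  exact hcard.symm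

end ZMod

namespace DihedralGroup

variable {n : ℕ}

def rotSubgroup (A : AddSubgroup (ZMod n)) : Subgroup (DihedralGroup n) where
  carrier := {g | match g with | r x => x ∈ A | sr _ => False}
  mul_mem' := by
    rintro (x | x) (y | y) hx hy <;>
      simp only [Set.mem_ofPred_eq, r_mul_r] at hx hy ⊢
    exact add_mem hx hy
  one_mem' := A.zero_mem
  inv_mem' := by
    rintro (x | x) hx <;> simp only [Set.mem_ofPred_eq, inv_r] at hx ⊢
    exact neg_mem hx

def rotReflSubgroup (A : AddSubgroup (ZMod n)) (a : ZMod n) : Subgroup (DihedralGroup n) where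
  carrier := {g | match g with | r x => x ∈ A | sr y => y - a ∈ A}
  mul_mem' := by
    rintro (x | x) (y | y) hx hy <;>
      simp only [Set.mem_ofPred_eq, r_mul_r, r_mul_sr, sr_mul_r, sr_mul_sr] at hx hy ⊢
    · exact add_mem hx hy
    · simpa [sub_right_comm] using sub_mem hy hx
    · simpa [sub_add_eq_add_sub] using add_mem hx hy
    · simpa using sub_mem hy hx
  one_mem' := A.zero_mem
  inv_mem' := by
    rintro (x | x) hx <;> simp only [Set.mem_ofPred_eq, inv_r, inv_sr] at hx ⊢
    · exact neg_mem hx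
    · exact hx

def rotPart (K : Subgroup (DihedralGroup n)) : AddSubgroup (ZMod n) where
  carrier := {x | r x ∈ K}
  add_mem' {x y} hx hy := by
    simpa only [Set.mem_ofPred_eq, ← r_mul_r] using K.mul_mem hx hy
  zero_mem' := K.one_mem
  neg_mem' {x} hx := by simpa only [Set.mem_ofPred_eq, ← inv_r] using K.inv_mem hx

variable {A B : AddSubgroup (ZMod n)} {a x : ZMod n} {K : Subgroup (DihedralGroup n)}

@[simp] theorem sr_notMem_rotSubgroup : sr x ∉ rotSubgroup A := id
@[simp] theorem r_mem_rotReflSubgroup : r x ∈ rotReflSubgroup A a ↔ x ∈ A := Iff.rfl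
@[simp] theorem sr_mem_rotReflSubgroup : sr x ∈ rotReflSubgroup A a ↔ x - a ∈ A := Iff.rfl
@[simp] theorem mem_rotPart : x ∈ rotPart K ↔ r x ∈ K := Iff.rfl

theorem natCard_rotSubgroup (A : AddSubgroup (ZMod n)) : Nat.card (rotSubgroup A) = Nat.card A :=
  Nat.card_congr {
    toFun g := match g with
      | ⟨r x, hx⟩ => ⟨x, hx⟩
      | ⟨sr _, h⟩ => h.elim
    invFun x := ⟨r x, x.2⟩
    left_inv := by rintro ⟨x | x, hx⟩; exacts [rfl, hx.elim]
    right_inv _ := rfl }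

theorem natCard_rotReflSubgroup [NeZero n] (A : AddSubgroup (ZMod n)) (a : ZMod n) :
    Nat.card (rotReflSubgroup A a) = 2 * Nat.card A := by
  rw [two_mul, ← Nat.card_sum]
  exact Nat.card_congr {
    toFun g := match g with
      | ⟨r x, hx⟩ => .inl ⟨x, hx⟩
      | ⟨sr y, hy⟩ => .inr ⟨y - a, hy⟩
    invFun := Sum.elim (fun x ↦ ⟨r x, x.2⟩) (fun x ↦ ⟨sr (x + a), by simp⟩)
    left_inv := by rintro ⟨x | x, hx⟩ <;> simp
    right_inv := by rintro (x | x) <;> simp }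

theorem rotSubgroup_rotPart (h : ∀ y, sr y ∉ K) : rotSubgroup (rotPart K) = K := by
  ext (x | y)
  · rfl
  · simpa using h y

theorem rotReflSubgroup_rotPart (h : sr a ∈ K) : rotReflSubgroup (rotPart K) a = K := by
  ext (x | y)
  · rfl
  · rw [sr_mem_rotReflSubgroup, mem_rotPart, ← sr_mul_sr, K.mul_mem_cancel_left h]

theorem disjoint_rotSubgroup_rotReflSubgroup :
    Disjoint (rotSubgroup A) (rotReflSubgroup B a) ↔ Disjoint A B := by
  simp only [Subgroup.disjoint_def, AddSubgroup.disjoint_def]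
  constructor
  · intro h x hA hB
    have := h (x := r x) hA hB
    rwa [one_def, r.injEq] at this
  · rintro h (x | y) hA hB
    · rw [h hA hB, r_zero]
    · exact (sr_notMem_rotSubgroup hA).elim

theorem sr_notMem_of_odd_natCard (h : Odd (Nat.card K)) (y : ZMod n) : sr y ∉ K := fun hy ↦ by
  have h2 := K.orderOf_dvd_natCard hy
  rw [orderOf_sr] at h2
  exact Nat.not_even_iff_odd.2 h (even_iff_two_dvd.2 h2)

theorem exists_sr_mem_of_even_natCard (hn : Odd n) (h : Even (Nat.card K)) : ∃ a, sr a ∈ K := by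
  have : NeZero n := ⟨hn.pos.ne'⟩
  obtain ⟨⟨g, hg⟩, hg2⟩ := exists_prime_orderOf_dvd_card' (G := K) 2 (even_iff_two_dvd.1 h)
  rw [Subgroup.orderOf_mk] at hg2
  cases g with
  | r x =>
    have hdvd : orderOf (r x) ∣ n := orderOf_dvd_of_pow_eq_one (by simp [r_pow])
    exact absurd (hg2 ▸ hdvd) (Nat.not_even_iff_odd.2 hn ∘ even_iff_two_dvd.2)
  | sr a => exact ⟨a, hg⟩

theorem map_conj_rotReflSubgroup (A : AddSubgroup (ZMod n)) (a t : ZMod n) :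
    (rotReflSubgroup A a).map (MulAut.conj (r t) : DihedralGroup n →* DihedralGroup n) =
      rotReflSubgroup A (a - 2 * t) := by
  ext g
  refine Subgroup.mem_map_equiv.trans ?_
  rcases g with x | y
  · simp [r_mul_r]
  · simp only [MulAut.conj_symm_apply, inv_r, r_mul_sr, sr_mul_r, sr_mem_rotReflSubgroup]
    ring_nf

theorem nonempty_mulEquiv_rotReflSubgroup (hn : Odd n) (A : AddSubgroup (ZMod n)) (a b : ZMod n) :
    Nonempty (rotReflSubgroup A a ≃* rotReflSubgroup A b) := by
  obtain ⟨t, ht⟩ := ZMod.exists_two_mul_eq hn (a - b)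
  exact ⟨((MulAut.conj (r t)).subgroupMap _).trans
    (.subgroupCongr (by rw [map_conj_rotReflSubgroup, ht, sub_sub_cancel]))⟩

end DihedralGroup

section ExactFactorization

variable {G : Type*} [Group G] {p : Subgroup G × Subgroup G}

theorem isExactFactorization_iff :
    IsExactFactorization p ↔ p.1 ≠ ⊥ ∧ p.2 ≠ ⊥ ∧ p.1.IsComplement' p.2 := by
  refine and_congr_right' <| and_congr_right'
    ⟨fun ⟨hinf, hmul⟩ ↦ ?_, fun h ↦ ⟨h.disjoint.eq_bot, ?_⟩⟩
  · refine Subgroup.isComplement'_of_disjoint_and_mul_eq_univ (disjoint_iff.2 hinf) ?_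
    refine Set.eq_univ_of_forall fun g ↦ ?_
    obtain ⟨h, hh, k, hk, rfl⟩ := hmul g
    exact Set.mul_mem_mul hh hk
  · intro g
    obtain ⟨⟨⟨h, hh⟩, ⟨k, hk⟩⟩, hg⟩ := h.2 g
    exact ⟨h, hh, k, hk, hg.symm⟩

theorem IsExactFactorization.natCard_mul_natCard (hp : IsExactFactorization p) :
    Nat.card p.1 * Nat.card p.2 = Nat.card G :=
  (isExactFactorization_iff.1 hp).2.2.card_mul_card

theorem IsExactFactorization.swap (hp : IsExactFactorization p) : IsExactFactorization p.swap :=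
  let ⟨h₁, h₂, hc⟩ := isExactFactorization_iff.1 hp
  isExactFactorization_iff.2 ⟨h₂, h₁, hc.symm⟩

theorem factEquiv_equivalence : Equivalence (FactEquiv (G := G)) where
  refl _ := .inl ⟨⟨.refl _⟩, ⟨.refl _⟩⟩
  symm := by
    rintro p q (⟨⟨e₁⟩, ⟨e₂⟩⟩ | ⟨⟨e₁⟩, ⟨e₂⟩⟩)
    exacts [.inl ⟨⟨e₁.symm⟩, ⟨e₂.symm⟩⟩, .inr ⟨⟨e₂.symm⟩, ⟨e₁.symm⟩⟩]
  trans := by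
    rintro p q r (⟨⟨e₁⟩, ⟨e₂⟩⟩ | ⟨⟨e₁⟩, ⟨e₂⟩⟩) (⟨⟨f₁⟩, ⟨f₂⟩⟩ | ⟨⟨f₁⟩, ⟨f₂⟩⟩)
    exacts [.inl ⟨⟨e₁.trans f₁⟩, ⟨e₂.trans f₂⟩⟩, .inr ⟨⟨e₁.trans f₁⟩, ⟨e₂.trans f₂⟩⟩,
      .inr ⟨⟨e₁.trans f₂⟩, ⟨e₂.trans f₁⟩⟩, .inl ⟨⟨e₁.trans f₂⟩, ⟨e₂.trans f₁⟩⟩]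

end ExactFactorization

namespace DihedralGroup

open Nat

variable {n d : ℕ}

theorem natCard_mul_natCard_of_isExactFactorization {H K : Subgroup (DihedralGroup n)}
    (hp : IsExactFactorization (H, K)) : Nat.card H * Nat.card K = 2 * n :=
  nat_card (n := n) ▸ hp.natCard_mul_natCard

-- The factorization `D_{2n} = C_d · D_{2(n / d)}` attached to a unitary divisor `d` of `n`.
def unitaryFactorization (n d : ℕ) : Subgroup (DihedralGroup n) × Subgroup (DihedralGroup n) :=
  (rotSubgroup (ZMod.nsmulKer n d), rotReflSubgroup (ZMod.nsmulKer n (n / d)) 0)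

theorem natCard_unitaryFactorization_fst [NeZero n] (hd : d ∣ n) :
    Nat.card (unitaryFactorization n d).1 = d := by
  rw [unitaryFactorization, natCard_rotSubgroup, ZMod.natCard_nsmulKer_of_dvd hd]

theorem natCard_unitaryFactorization_snd [NeZero n] (hd : d ∣ n) :
    Nat.card (unitaryFactorization n d).2 = 2 * (n / d) := by
  rw [unitaryFactorization, natCard_rotReflSubgroup,
    ZMod.natCard_nsmulKer_of_dvd (Nat.div_dvd_of_dvd hd)]

theorem isExactFactorization_unitaryFactorization (hd : d ∈ n.unitaryDivisors) (hd1 : d ≠ 1) :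
    IsExactFactorization (unitaryFactorization n d) := by
  obtain ⟨⟨hdn, hn⟩, hcop⟩ := mem_unitaryDivisors.1 hd
  have : NeZero n := ⟨hn⟩
  rw [isExactFactorization_iff, Subgroup.isComplement'_iff_card_mul_and_disjoint, Ne, Ne,
    ← Subgroup.card_eq_one, ← Subgroup.card_eq_one, natCard_unitaryFactorization_fst hdn,
    natCard_unitaryFactorization_snd hdn, nat_card, mul_left_comm, Nat.mul_div_cancel' hdn]
  refine ⟨hd1, by omega, rfl, disjoint_rotSubgroup_rotReflSubgroup.2 ?_⟩
  refine AddSubgroup.disjoint_of_coprime_natCard ?_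
  rwa [ZMod.natCard_nsmulKer_of_dvd hdn, ZMod.natCard_nsmulKer_of_dvd (Nat.div_dvd_of_dvd hdn)]

theorem exists_unitaryFactorization_of_isExactFactorization (hn : Odd n)
    {H K : Subgroup (DihedralGroup n)} (hp : IsExactFactorization (H, K))
    (hH : Odd (Nat.card H)) : ∃ d ∈ n.unitaryDivisors, d ≠ 1 ∧
      H = (unitaryFactorization n d).1 ∧ ∃ a, K = rotReflSubgroup (ZMod.nsmulKer n (n / d)) a := by
  have : NeZero n := ⟨hn.pos.ne'⟩
  have hcard := natCard_mul_natCard_of_isExactFactorization hp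
  have hK : Even (Nat.card K) :=
    (Nat.even_mul.1 (hcard ▸ even_two_mul n)).resolve_left (Nat.not_even_iff_odd.2 hH)
  obtain ⟨a, ha⟩ := exists_sr_mem_of_even_natCard hn hK
  obtain ⟨A, rfl⟩ : ∃ A, H = rotSubgroup A :=
    ⟨_, (rotSubgroup_rotPart (sr_notMem_of_odd_natCard hH)).symm⟩
  obtain ⟨B, rfl⟩ : ∃ B, K = rotReflSubgroup B a := ⟨_, (rotReflSubgroup_rotPart ha).symm⟩
  have hAB : Nat.card A * Nat.card B = n := by
    rw [natCard_rotSubgroup, natCard_rotReflSubgroup, mul_left_comm] at hcard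
    exact Nat.eq_of_mul_eq_mul_left two_pos hcard
  have hdiv : n / Nat.card A = Nat.card B :=
    Nat.div_eq_of_eq_mul_right Nat.card_pos hAB.symm
  have hdisj : Disjoint A B := disjoint_rotSubgroup_rotReflSubgroup.1
    (isExactFactorization_iff.1 hp).2.2.disjoint
  refine ⟨Nat.card A, mem_unitaryDivisors.2 ⟨⟨Dvd.intro _ hAB, hn.pos.ne'⟩,
    hdiv ▸ ZMod.coprime_natCard_of_disjoint hdisj⟩, ?_, ?_, a, ?_⟩
  · rw [← natCard_rotSubgroup, Ne, Subgroup.card_eq_one]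
    exact hp.1
  · rw [unitaryFactorization, ← ZMod.eq_nsmulKer_natCard]
  · rw [hdiv, ← ZMod.eq_nsmulKer_natCard]

def unitaryFactorizationClass (n : ℕ) (d : n.unitaryDivisors.erase 1) :
    Quot (FactEquiv (G := DihedralGroup n)) :=
  Quot.mk _ ⟨unitaryFactorization n d,
    isExactFactorization_unitaryFactorization (mem_of_mem_erase d.2) (ne_of_mem_erase d.2)⟩

theorem bijective_unitaryFactorizationClass (hn : Odd n) :
    Function.Bijective (unitaryFactorizationClass n) := by
  have : NeZero n := ⟨hn.pos.ne'⟩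
  constructor
  · rintro ⟨d, hd⟩ ⟨d', hd'⟩ h
    have hdn : d ∣ n := (mem_unitaryDivisors.1 (mem_of_mem_erase hd)).1.1
    have hdn' : d' ∣ n := (mem_unitaryDivisors.1 (mem_of_mem_erase hd')).1.1
    rcases factEquiv_equivalence.eqvGen_iff.1 (Quot.eqvGen_exact h) with ⟨⟨e⟩, -⟩ | ⟨⟨e⟩, -⟩
    · have := Nat.card_congr e.toEquiv
      rw [natCard_unitaryFactorization_fst hdn, natCard_unitaryFactorization_fst hdn'] at this
      exact Subtype.ext this
    · have := Nat.card_congr e.toEquiv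
      rw [natCard_unitaryFactorization_fst hdn, natCard_unitaryFactorization_snd hdn'] at this
      exact absurd (this ▸ even_two_mul _) (Nat.not_even_iff_odd.2 (hn.of_dvd_nat hdn))
  · rintro ⟨⟨H, K⟩, hp⟩
    rcases odd_or_odd_of_mul_eq_two_mul hn (natCard_mul_natCard_of_isExactFactorization hp)
      with hH | hK
    · obtain ⟨d, hd, hd1, rfl, a, rfl⟩ :=
        exists_unitaryFactorization_of_isExactFactorization hn hp hH
      exact ⟨⟨d, mem_erase.2 ⟨hd1, hd⟩⟩, Quot.sound (.inl ⟨⟨.refl _⟩,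
        nonempty_mulEquiv_rotReflSubgroup hn _ _ _⟩)⟩
    · obtain ⟨d, hd, hd1, rfl, a, rfl⟩ :=
        exists_unitaryFactorization_of_isExactFactorization hn hp.swap hK
      exact ⟨⟨d, mem_erase.2 ⟨hd1, hd⟩⟩, Quot.sound (.inr ⟨⟨.refl _⟩,
        nonempty_mulEquiv_rotReflSubgroup hn _ _ _⟩)⟩

end DihedralGroup

theorem f₂_dihedral_odd_general (n : ℕ) (hodd : Odd n) :
    f₂ (DihedralGroup n) = 2 ^ n.primeFactors.card - 1 := by
  rw [f₂, ← Nat.card_eq_of_bijective _ (DihedralGroup.bijective_unitaryFactorizationClass hodd),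
    Nat.card_eq_finsetCard, Finset.card_erase_of_mem (Nat.one_mem_unitaryDivisors hodd.pos.ne'),
    Nat.card_unitaryDivisors hodd.pos.ne']

/-- For odd `n`, the number of inequivalent exact factorizations of the dihedral group
`D_{2n}` equals `2 ^ ω(n) - 1`. -/
theorem f₂_dihedral_odd (n : ℕ) (hn : 0 < n) (hodd : Odd n) :
    f₂ (DihedralGroup n) = 2 ^ n.primeFactors.card - 1 :=
  f₂_dihedral_odd_general n hodd
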